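/- Let p₁, ..., p_n ∈ ℤ^d and q₁, ..., q_n ∈ ℤ^d with n ≥ d+1, and suppose p₁,...,p_{d+1} and q₁,...,q_{d+1} are each affinely independent. Define for each (d+1)-subset indexed by i₁ < ... < i_{d+1} the signed volume w^P_{i₁,...,i_{d+1}} = det of the (d+1)×(d+1) matrix with columns (1, p_{i_k}), and similarly w^Q. If there exist nonzero reals x, y with x·w^P = y·w^Q componentwise, then the unique affine map φ : ℝ^d → ℝ^d with φ(p_j) = q_j for j = 1,...,d+1 satisfies φ(p_i) = q_i for all i = 1,...,n. -/
import Mathlib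

open Finset Matrix in
lemma aux13_det_ne_zero (d : ℕ) (P : Fin (d + 1) → (Fin d → ℝ))
    (hp : AffineIndependent ℝ P) :
    (Matrix.of fun r k : Fin (d + 1) => (Fin.cons 1 (P k) : Fin (d + 1) → ℝ) r).det ≠ 0 := by
  set A : Matrix (Fin (d + 1)) (Fin (d + 1)) ℝ :=
    Matrix.of fun r k : Fin (d + 1) => (Fin.cons 1 (P k) : Fin (d + 1) → ℝ) r with hA
  have hli : LinearIndependent ℝ (fun k => Aᵀ k) := by
    rw [Fintype.linearIndependent_iff]
    intro g hg
    have h0 : ∑ k, g k = 0 := by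
      have := congrFun hg 0
      simpa [hA, Finset.sum_apply] using this
    have h1 : ∑ k, g k • P k = 0 := by
      funext r
      have := congrFun hg r.succ
      simpa [hA, Finset.sum_apply] using this
    exact fun k => affineIndependent_iff.mp hp Finset.univ g h0 h1 k (Finset.mem_univ k)
  have hu : IsUnit A := Matrix.linearIndependent_cols_iff_isUnit.mp hli
  have := (Matrix.isUnit_iff_isUnit_det A).mp hu
  exact this.ne_zero

/-- Sufficiency: if the volume vectors of two lattice point configurations are
proportional (and the first d+1 points of each are affinely independent), then the
affine map determined by the first d+1 points maps every p_i to q_i. -/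
theorem stmt13 (d n : ℕ) (hn : d + 1 ≤ n)
    (p q : Fin n → (Fin d → ℤ))
    (hp : AffineIndependent ℝ (fun j : Fin (d + 1) => fun k => (p (Fin.castLE hn j) k : ℝ)))
    (hq : AffineIndependent ℝ (fun j : Fin (d + 1) => fun k => (q (Fin.castLE hn j) k : ℝ)))
    (hw : ∃ x y : ℝ, x ≠ 0 ∧ y ≠ 0 ∧ ∀ s : Fin (d + 1) → Fin n,
      x * (Matrix.of fun i k : Fin (d + 1) => Fin.cons 1 (fun j => (p (s k) j : ℝ)) i).det
        = y * (Matrix.of fun i k : Fin (d + 1) => Fin.cons 1 (fun j => (q (s k) j : ℝ)) i).det)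
    (φ : (Fin d → ℝ) →ᵃ[ℝ] (Fin d → ℝ))
    (hφ : ∀ j : Fin (d + 1),
      φ (fun k => (p (Fin.castLE hn j) k : ℝ)) = fun k => (q (Fin.castLE hn j) k : ℝ)) :
    ∀ i : Fin n, φ (fun k => (p i k : ℝ)) = fun k => (q i k : ℝ) := by
  classical
  obtain ⟨x, y, hx, hy, hxy⟩ := hw
  intro i
  set P : Fin n → Fin d → ℝ := fun i k => (p i k : ℝ) with hP
  set Q : Fin n → Fin d → ℝ := fun i k => (q i k : ℝ) with hQ
  set A : Matrix (Fin (d + 1)) (Fin (d + 1)) ℝ :=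
    Matrix.of fun r k : Fin (d + 1) => (Fin.cons 1 (P (Fin.castLE hn k)) : Fin (d + 1) → ℝ) r with hA
  set B : Matrix (Fin (d + 1)) (Fin (d + 1)) ℝ :=
    Matrix.of fun r k : Fin (d + 1) => (Fin.cons 1 (Q (Fin.castLE hn k)) : Fin (d + 1) → ℝ) r with hB
  have hdetA : A.det ≠ 0 := aux13_det_ne_zero d _ hp
  have hdetB : B.det ≠ 0 := aux13_det_ne_zero d _ hq
  set bP : Fin (d + 1) → ℝ := (Fin.cons 1 (P i) : Fin (d + 1) → ℝ) with hbP
  set bQ : Fin (d + 1) → ℝ := (Fin.cons 1 (Q i) : Fin (d + 1) → ℝ) with hbQ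
  -- base determinant relation
  have hbase : x * A.det = y * B.det := hxy (Fin.castLE hn)
  -- updated column relations
  have hupd : ∀ j : Fin (d + 1),
      x * (A.updateCol j bP).det = y * (B.updateCol j bQ).det := by
    intro j
    have h1 : A.updateCol j bP = Matrix.of fun r k : Fin (d + 1) =>
        (Fin.cons 1 (fun m => (p (Function.update (Fin.castLE hn) j i k) m : ℝ)) : Fin (d + 1) → ℝ) r := by
      ext r k
      by_cases hk : k = j <;>
        simp [Matrix.updateCol_apply, hk, Function.update, hA, hbP, hP]
    have h2 : B.updateCol j bQ = Matrix.of fun r k : Fin (d + 1) =>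
        (Fin.cons 1 (fun m => (q (Function.update (Fin.castLE hn) j i k) m : ℝ)) : Fin (d + 1) → ℝ) r := by
      ext r k
      by_cases hk : k = j <;>
        simp [Matrix.updateCol_apply, hk, Function.update, hB, hbQ, hQ]
    rw [h1, h2]
    exact hxy (Function.update (Fin.castLE hn) j i)
  -- barycentric coefficients
  set c : Fin (d + 1) → ℝ := fun j => (A.updateCol j bP).det / A.det with hc
  have hcB : ∀ j, c j = (B.updateCol j bQ).det / B.det := by
    intro j
    rw [hc]
    rw [div_eq_div_iff hdetA hdetB]
    have hx' : x * ((A.updateCol j bP).det * B.det)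
        = x * ((B.updateCol j bQ).det * A.det) := by
      calc x * ((A.updateCol j bP).det * B.det)
          = (x * (A.updateCol j bP).det) * B.det := by ring
        _ = (y * (B.updateCol j bQ).det) * B.det := by rw [hupd j]
        _ = (B.updateCol j bQ).det * (y * B.det) := by ring
        _ = (B.updateCol j bQ).det * (x * A.det) := by rw [hbase]
        _ = x * ((B.updateCol j bQ).det * A.det) := by ring
    exact mul_left_cancel₀ hx hx'
  -- A *ᵥ c = bP
  have hAc : A.mulVec c = bP := by
    have h1 : c = (A.det)⁻¹ • Matrix.cramer A bP := by
      funext j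
      simp [hc, Matrix.cramer_apply, div_eq_inv_mul]
    rw [h1, Matrix.mulVec_smul, Matrix.mulVec_cramer, smul_smul,
      inv_mul_cancel₀ hdetA, one_smul]
  have hBc : B.mulVec c = bQ := by
    have h1 : c = (B.det)⁻¹ • Matrix.cramer B bQ := by
      funext j
      simp [hcB j, Matrix.cramer_apply, div_eq_inv_mul]
    rw [h1, Matrix.mulVec_smul, Matrix.mulVec_cramer, smul_smul,
      inv_mul_cancel₀ hdetB, one_smul]
  -- extract scalar facts
  have hsum : ∑ j, c j = 1 := by
    have := congrFun hAc 0
    simpa [Matrix.mulVec, dotProduct, hA, hbP] using this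
  have hPsum : ∑ j, c j • P (Fin.castLE hn j) = P i := by
    funext r
    have := congrFun hAc r.succ
    simpa [Matrix.mulVec, dotProduct, hA, hbP, Finset.sum_apply,
      mul_comm] using this
  have hQsum : ∑ j, c j • Q (Fin.castLE hn j) = Q i := by
    funext r
    have := congrFun hBc r.succ
    simpa [Matrix.mulVec, dotProduct, hB, hbQ, Finset.sum_apply,
      mul_comm] using this
  have hPcomb : Finset.univ.affineCombination ℝ (fun j : Fin (d + 1) =>
      P (Fin.castLE hn j)) c = P i := by
    rw [Finset.affineCombination_eq_linear_combination _ _ _ hsum]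
    exact hPsum
  have hQcomb : Finset.univ.affineCombination ℝ (fun j : Fin (d + 1) =>
      Q (Fin.castLE hn j)) c = Q i := by
    rw [Finset.affineCombination_eq_linear_combination _ _ _ hsum]
    exact hQsum
  show φ (P i) = Q i
  rw [← hPcomb, Finset.map_affineCombination _ _ _ hsum, ← hQcomb]
  have hfun : (⇑φ ∘ fun j : Fin (d + 1) => P (Fin.castLE hn j))
      = fun j : Fin (d + 1) => Q (Fin.castLE hn j) := by
    funext j
    exact hφ j
  rw [hfun]
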